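/- arXiv:1108.5597 — 6 statements merged into one kernel-verified Lean document; each statement's English description precedes it below -/
import Mathlib

section
/- Let G ≤ S_n be a transitive permutation group containing a transposition. Then all transpositions contained in G are conjugate in G. -/
/-- Number of orbits of the cyclic group generated by a permutation. -/
noncomputable def orbCount {α : Type*} [Fintype α] (g : Equiv.Perm α) : ℕ :=
  Nat.card (MulAction.orbitRel.Quotient (Subgroup.zpowers g) α)

/-- The index of a permutation: `ind(g) = n - #orbits(⟨g⟩)`. -/
noncomputable def permInd {α : Type*} [Fintype α] (g : Equiv.Perm α) : ℕ :=
  Fintype.card α - orbCount g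

/-- The index of a permutation group: the minimum of `permInd g` over `1 ≠ g ∈ G`. -/
noncomputable def grpInd {α : Type*} [Fintype α] (G : Subgroup (Equiv.Perm α)) : ℕ :=
  sInf {m | ∃ g ∈ G, g ≠ 1 ∧ permInd g = m}

/-- A subgroup of permutations is transitive. -/
def IsTransitive {α : Type*} (G : Subgroup (Equiv.Perm α)) : Prop :=
  ∀ i j : α, ∃ g ∈ G, g i = j

/-- `B` is a block for the permutation group `G`. -/
def IsBlockOf {α : Type*} (G : Subgroup (Equiv.Perm α)) (B : Set α) : Prop :=
  ∀ g ∈ G, (⇑g '' B = B ∨ Disjoint (⇑g '' B) B)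

/-- `G` is a primitive permutation group. -/
def IsPrimitive {α : Type*} (G : Subgroup (Equiv.Perm α)) : Prop :=
  IsTransitive G ∧ ∀ B : Set α, IsBlockOf G B → B.Subsingleton ∨ B = Set.univ

/-!
By transitivity, `(a b)` is conjugate in `G` to some `(c e)`, so it suffices to
conjugate `(c e)` to `(c d)` when both lie in `G`. For `e ≠ d` the conjugator is `(e d)`,
which lies in `G` because it is the conjugate of `(c d)` by `(c e)`.
-/

open Equiv

section

variable {α : Type*} [DecidableEq α] {G : Subgroup (Perm α)}

lemma exists_conj_swap_eq_swap_of_mem {c d e : α} (hce : c ≠ e) (hcd : c ≠ d)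
    (he : swap c e ∈ G) (hd : swap c d ∈ G) : ∃ h ∈ G, h * swap c e * h⁻¹ = swap c d := by
  by_cases hed : e = d
  · exact ⟨1, G.one_mem, by simp [hed]⟩
  refine ⟨swap e d, ?_, ?_⟩
  · rw [← swap_mul_swap_mul_swap hcd.symm (Ne.symm hed), swap_comm d c]
    exact mul_mem (mul_mem he hd) he
  · rw [swap_inv, swap_mul_swap_mul_swap hce hcd, swap_comm]

theorem IsTransitive.exists_conj_of_isSwap (hT : IsTransitive G) {σ τ : Perm α}
    (hσ : σ ∈ G) (hτ : τ ∈ G)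
    (hσ_swap : σ.IsSwap) (hτ_swap : τ.IsSwap) : ∃ g ∈ G, g * σ * g⁻¹ = τ := by
  obtain ⟨a, b, hab, rfl⟩ := hσ_swap
  obtain ⟨c, d, hcd, rfl⟩ := hτ_swap
  obtain ⟨g, hg, rfl⟩ := hT a c
  have hconj : g * swap a b * g⁻¹ = swap (g a) (g b) := (swap_apply_apply g a b).symm
  obtain ⟨h, hh, hconj'⟩ := exists_conj_swap_eq_swap_of_mem (g.injective.ne hab) hcd
    (hconj ▸ mul_mem (mul_mem hg hσ) (inv_mem hg)) hτ
  refine ⟨h * g, mul_mem hh hg, ?_⟩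
  rw [mul_inv_rev, ← hconj', ← hconj]
  group

end

/-- In a transitive permutation group `G ≤ Sₙ`, all transpositions contained in `G`
are conjugate within `G`. -/
theorem stmt_2 {n : ℕ} (G : Subgroup (Equiv.Perm (Fin n))) (hT : IsTransitive G) :
    ∀ σ τ : Equiv.Perm (Fin n), σ ∈ G → τ ∈ G → σ.IsSwap → τ.IsSwap →
      ∃ g ∈ G, g * σ * g⁻¹ = τ :=
  fun _ _ hσ hτ hσ_swap hτ_swap => hT.exists_conj_of_isSwap hσ hτ hσ_swap hτ_swap
end

section
/- Let G ≤ S_n be transitive, let τ = (i,j) ∈ G be a transposition, and let B be a minimal block of G of size greater than 1 containing i. Then j ∈ B, and the image of the setwise stabilizer of B in G under restriction to B is the full symmetric group Sym(B). -/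
/-!
The transpositions of `G` define an equivalence relation `a ~ b :⟺ (a b) ∈ G` whose classes
are permuted by `G`, so the class of `i` is a block. We have `j ∈ B`, since otherwise `(i j)`
would fix a second point of `B` and hence map `B` onto itself. So the class of `i` meets `B` in
a block inside `B` containing `i` and `j`, which is all of `B` by minimality. Hence `G` contains
every transposition of `B`, and these generate `Sym(B)`.
-/

open Equiv Equiv.Perm Subgroup

section

variable {α : Type*} {G : Subgroup (Perm α)}

theorem IsBlockOf.inter {B C : Set α} (hB : IsBlockOf G B) (hC : IsBlockOf G C) :
    IsBlockOf G (B ∩ C) := by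
  intro g hg
  rw [Set.image_inter g.injective]
  rcases hB g hg with hgB | hgB
  · rcases hC g hg with hgC | hgC
    · exact Or.inl (by rw [hgB, hgC])
    · exact Or.inr (hgC.mono Set.inter_subset_right Set.inter_subset_right)
  · exact Or.inr (hgB.mono Set.inter_subset_left Set.inter_subset_left)

theorem image_ofSubtype {B : Set α} [DecidablePred (· ∈ B)] (σ : Perm B) :
    ⇑(ofSubtype σ) '' B = B := by
  have hpre : ⇑(ofSubtype σ) ⁻¹' B = B := Set.ext (ofSubtype_apply_mem_iff_mem σ)
  calc ⇑(ofSubtype σ) '' B = ⇑(ofSubtype σ) '' (⇑(ofSubtype σ) ⁻¹' B) := by rw [hpre]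
    _ = B := Set.image_preimage_eq _ (ofSubtype σ).surjective

variable [DecidableEq α]

theorem IsBlockOf.mem_of_swap_mem {B : Set α} {i j : α} (hB : IsBlockOf G B)
    (hτ : swap i j ∈ G) (hiB : i ∈ B) (hBnt : B.Nontrivial) : j ∈ B := by
  by_contra hjB
  obtain ⟨x, hxB, hxi⟩ := hBnt.exists_ne i
  have hxj : x ≠ j := ne_of_mem_of_not_mem hxB hjB
  have hfix : x ∈ ⇑(swap i j) '' B ∩ B := ⟨⟨x, hxB, swap_apply_of_ne_of_ne hxi hxj⟩, hxB⟩
  rcases hB _ hτ with hτB | hτB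
  · exact hjB (hτB ▸ ⟨i, hiB, swap_apply_left i j⟩)
  · exact hτB.notMem_of_mem_left hfix.1 hfix.2

theorem swap_apply_mem_iff {g : Perm α} (hg : g ∈ G) {a b : α} :
    swap (g a) (g b) ∈ G ↔ swap a b ∈ G := by
  rw [swap_apply_apply]
  constructor
  · intro h
    simpa [mul_assoc] using G.mul_mem (G.mul_mem (G.inv_mem hg) h) hg
  · intro h
    exact G.mul_mem (G.mul_mem hg h) (G.inv_mem hg)

def swapClass (G : Subgroup (Perm α)) (a : α) : Set α :=
  {b | swap a b ∈ G}

theorem mem_swapClass_self (a : α) : a ∈ swapClass G a := by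
  show swap a a ∈ G
  rw [swap_self]
  exact G.one_mem

theorem swapClass_eq_of_mem {a b : α} (hb : b ∈ swapClass G a) :
    swapClass G b = swapClass G a := by
  have hba : swap b a ∈ G := by rwa [swap_comm]
  ext c
  exact ⟨SubmonoidClass.swap_mem_trans G hb, SubmonoidClass.swap_mem_trans G hba⟩

theorem image_swapClass {g : Perm α} (hg : g ∈ G) (a : α) :
    ⇑g '' swapClass G a = swapClass G (g a) := by
  ext b
  obtain ⟨c, rfl⟩ := g.surjective b
  exact g.injective.mem_set_image.trans (swap_apply_mem_iff hg).symm

theorem isBlockOf_swapClass (G : Subgroup (Perm α)) (a : α) : IsBlockOf G (swapClass G a) := by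
  intro g hg
  rw [image_swapClass hg]
  by_cases hga : g a ∈ swapClass G a
  · exact Or.inl (swapClass_eq_of_mem hga)
  · refine Or.inr (Set.disjoint_left.2 fun c hc hc' => hga ?_)
    rw [← swapClass_eq_of_mem hc', swapClass_eq_of_mem hc]
    exact mem_swapClass_self (g a)

theorem swap_mem_of_subset_swapClass {B : Set α} {a : α} (hB : B ⊆ swapClass G a)
    {b c : α} (hb : b ∈ B) (hc : c ∈ B) : swap b c ∈ G := by
  rw [← swapClass_eq_of_mem (hB hb)] at hB
  exact hB hc

theorem ofSubtype_mem_of_swap_mem {B : Set α} [DecidablePred (· ∈ B)] [Finite B]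
    (hB : ∀ b ∈ B, ∀ c ∈ B, swap b c ∈ G) (σ : Perm B) : ofSubtype σ ∈ G := by
  have hle : closure {τ : Perm B | τ.IsSwap} ≤ G.comap ofSubtype := by
    rw [closure_le]
    rintro _ ⟨x, y, -, rfl⟩
    simpa [ofSubtype_swap_eq] using hB x x.2 y y.2
  exact hle (closure_isSwap (α := B) ▸ mem_top σ)

end

theorem stmt_4_general {n : ℕ} (G : Subgroup (Equiv.Perm (Fin n)))
    (i j : Fin n) (hij : i ≠ j) (hτ : Equiv.swap i j ∈ G)
    (B : Set (Fin n)) (hB : IsBlockOf G B) (hiB : i ∈ B) (hBsize : 1 < B.ncard)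
    (hmin : ∀ B' : Set (Fin n), IsBlockOf G B' → i ∈ B' → B' ⊆ B →
      B'.Subsingleton ∨ B' = B) :
    j ∈ B ∧
    ∀ σ : Equiv.Perm B, ∃ g ∈ G, ⇑g '' B = B ∧ ∀ x : B, g (x : Fin n) = (σ x : Fin n) := by
  classical
  have hjB : j ∈ B := hB.mem_of_swap_mem hτ hiB (Set.one_lt_ncard_iff_nontrivial.1 hBsize)
  have hclass : swapClass G i ∩ B = B := by
    refine (hmin _ ((isBlockOf_swapClass G i).inter hB) ⟨mem_swapClass_self i, hiB⟩
      Set.inter_subset_right).resolve_left fun hsub => hij ?_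
    exact hsub ⟨mem_swapClass_self i, hiB⟩ ⟨hτ, hjB⟩
  have hswap : ∀ b ∈ B, ∀ c ∈ B, swap b c ∈ G := fun b hb c hc =>
    swap_mem_of_subset_swapClass (Set.inter_eq_right.1 hclass) hb hc
  exact ⟨hjB, fun σ => ⟨ofSubtype σ, ofSubtype_mem_of_swap_mem hswap σ, image_ofSubtype σ,
    ofSubtype_apply_coe σ⟩⟩

/-- Let `G ≤ Sₙ` be transitive, `τ = (i,j) ∈ G` a transposition and `B` a minimal block of
size `> 1` containing `i`. Then `j ∈ B` and the restriction to `B` of the setwise stabilizer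
of `B` in `G` is the full symmetric group on `B`. -/
theorem stmt_4 {n : ℕ} (G : Subgroup (Equiv.Perm (Fin n))) (hT : IsTransitive G)
    (i j : Fin n) (hij : i ≠ j) (hτ : Equiv.swap i j ∈ G)
    (B : Set (Fin n)) (hB : IsBlockOf G B) (hiB : i ∈ B) (hBsize : 1 < B.ncard)
    (hmin : ∀ B' : Set (Fin n), IsBlockOf G B' → i ∈ B' → B' ⊆ B →
      B'.Subsingleton ∨ B' = B) :
    j ∈ B ∧
    ∀ σ : Equiv.Perm B, ∃ g ∈ G, ⇑g '' B = B ∧ ∀ x : B, g (x : Fin n) = (σ x : Fin n) :=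
  stmt_4_general G i j hij hτ B hB hiB hBsize hmin
end

section
/- Let H₁ ≤ S_e and H₂ ≤ S_d be transitive, G = H₁ ≀ H₂ ≤ S_{ed}. If g = ((h_{1,1},…,h_{1,d}), h₂) ∈ G with h₂ ≠ 1, then the number of orbits of ⟨g⟩ on {1,…,e}×{1,…,d} is at most (d−1)e, i.e., ind(g) ≥ e. -/
/-- The element of the imprimitive wreath product acting on `Fin d × Fin e` given by
`(i, x) ↦ (h i, f i x)`: the blocks `{i} × Fin e` are permuted by `h` and the `i`-th
base coordinate `f i` acts inside the block. -/
def wrElem {e d : ℕ} (h : Equiv.Perm (Fin d)) (f : Fin d → Equiv.Perm (Fin e)) :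
    Equiv.Perm (Fin d × Fin e) := Equiv.prodShear h f

lemma wrElem_mul {e d : ℕ} (h h' : Equiv.Perm (Fin d)) (f f' : Fin d → Equiv.Perm (Fin e)) :
    wrElem h f * wrElem h' f' = wrElem (h * h') (fun i => f (h' i) * f' i) := by
  ext p <;> simp [wrElem, Equiv.prodShear, Equiv.Perm.mul_apply]

lemma wrElem_one {e d : ℕ} :
    (wrElem (1 : Equiv.Perm (Fin d)) (fun _ => (1 : Equiv.Perm (Fin e)))) = 1 := by
  ext p <;> simp [wrElem, Equiv.prodShear]

/-- The imprimitive wreath product `H₁ ≀ H₂ = H₁^d ⋊ H₂` as a subgroup of the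
permutations of `Fin d × Fin e`. -/
def wreath {e d : ℕ} (H₁ : Subgroup (Equiv.Perm (Fin e))) (H₂ : Subgroup (Equiv.Perm (Fin d))) :
    Subgroup (Equiv.Perm (Fin d × Fin e)) where
  carrier := {g | ∃ h f, h ∈ H₂ ∧ (∀ i, f i ∈ H₁) ∧ g = wrElem h f}
  one_mem' := ⟨1, fun _ => 1, H₂.one_mem, fun _ => H₁.one_mem, wrElem_one.symm⟩
  mul_mem' := by
    rintro a b ⟨h, f, hh, hf, rfl⟩ ⟨h', f', hh', hf', rfl⟩
    exact ⟨h * h', fun i => f (h' i) * f' i, H₂.mul_mem hh hh',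
      fun i => H₁.mul_mem (hf _) (hf' _), wrElem_mul h h' f f'⟩
  inv_mem' := by
    rintro a ⟨h, f, hh, hf, rfl⟩
    refine ⟨h⁻¹, fun j => (f (h⁻¹ j))⁻¹, H₂.inv_mem hh, fun j => H₁.inv_mem (hf _), ?_⟩
    apply inv_eq_of_mul_eq_one_right
    rw [wrElem_mul]
    simp only [mul_inv_cancel]
    exact wrElem_one

namespace Equiv.Perm

open MulAction

variable {α β γ : Type*}

theorem orbitRel_zpowers_iff (g : Perm α) (x y : α) :
    orbitRel (Subgroup.zpowers g) α x y ↔ ∃ n : ℤ, (g ^ n) y = x := by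
  simp only [orbitRel_apply, mem_orbit_iff, Subtype.exists,
    Subgroup.mem_zpowers_iff, exists_prop, exists_exists_eq_and, Subgroup.mk_smul,
    Perm.smul_def]

theorem zpow_apply_of_semiconj {φ : α → β} {g : Perm α} {h : Perm β}
    (hφ : Function.Semiconj φ g h) (n : ℤ) (x : α) : φ ((g ^ n) x) = (h ^ n) (φ x) := by
  induction n using Int.induction_on generalizing x with
  | zero => rfl
  | succ n ih => rw [zpow_add_one, zpow_add_one, mul_apply, mul_apply, ih, hφ]
  | pred n ih =>
    rw [zpow_sub_one, zpow_sub_one, mul_apply, mul_apply, ih]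
    exact congrArg _ (hφ.inverses_right g.right_inv h.left_inv x)

theorem semiconj_fst_prodShear (h : Perm β) (f : β → Perm γ) :
    Function.Semiconj Prod.fst (prodShear h f) h := fun _ => rfl

theorem orbCount_lt_card_of_ne_one [Fintype α] {g : Perm α} (hg : g ≠ 1) :
    orbCount g < Fintype.card α := by
  obtain ⟨x, hx⟩ : ∃ x, g x ≠ x := by
    by_contra! hfix
    exact hg (ext hfix)
  have hmk : Function.Surjective
      (Quotient.mk'' : α → orbitRel.Quotient (Subgroup.zpowers g) α) :=
    Quotient.mk''_surjective
  rw [← Nat.card_eq_fintype_card]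
  refine (Nat.card_le_card_of_surjective _ hmk).lt_of_ne fun hcard => hx ?_
  refine (hmk.bijective_of_nat_card_le hcard.ge).injective (Quotient.sound' ?_)
  exact (orbitRel_zpowers_iff g _ _).2 ⟨1, rfl⟩

theorem orbCount_prodShear_le [Fintype β] [Fintype γ] (h : Perm β) (f : β → Perm γ) :
    orbCount (prodShear h f) ≤ orbCount h * Fintype.card γ := by
  set g := prodShear h f
  have hsurj : Function.Surjective fun q : orbitRel.Quotient (Subgroup.zpowers h) β × γ =>
      (Quotient.mk'' (q.1.out, q.2) : orbitRel.Quotient (Subgroup.zpowers g) (β × γ)) := by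
    rintro ⟨p⟩
    set P : orbitRel.Quotient (Subgroup.zpowers h) β := Quotient.mk'' p.1
    obtain ⟨n, hn⟩ := (orbitRel_zpowers_iff h _ _).1 (Quotient.exact' P.out_eq')
    refine ⟨(P, ((g ^ n) p).2), Quotient.sound' ((orbitRel_zpowers_iff g _ _).2 ⟨n, ?_⟩)⟩
    exact Prod.ext ((zpow_apply_of_semiconj (semiconj_fst_prodShear h f) n p).trans hn) rfl
  calc orbCount g
      ≤ Nat.card (orbitRel.Quotient (Subgroup.zpowers h) β × γ) :=
        Nat.card_le_card_of_surjective _ hsurj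
    _ = orbCount h * Fintype.card γ := by
        rw [Nat.card_prod, Nat.card_eq_fintype_card (α := γ)]; rfl

end Equiv.Perm

theorem stmt_6_general {e d : ℕ}
    (h₂ : Equiv.Perm (Fin d)) (f : Fin d → Equiv.Perm (Fin e))
    (hne : h₂ ≠ 1) :
    orbCount (wrElem h₂ f) ≤ (d - 1) * e ∧ e ≤ permInd (wrElem h₂ f) := by
  have hlt : orbCount h₂ < d := by
    simpa using Equiv.Perm.orbCount_lt_card_of_ne_one hne
  have hle : orbCount (wrElem h₂ f) ≤ (d - 1) * e := by
    calc orbCount (wrElem h₂ f) ≤ orbCount h₂ * Fintype.card (Fin e) :=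
          Equiv.Perm.orbCount_prodShear_le h₂ f
      _ ≤ (d - 1) * e := by rw [Fintype.card_fin]; gcongr; omega
  refine ⟨hle, ?_⟩
  have hde : (d - 1) * e + e = d * e := by
    rw [← Nat.succ_mul, Nat.succ_eq_add_one, Nat.sub_add_cancel (by omega)]
  rw [permInd, Fintype.card_prod, Fintype.card_fin, Fintype.card_fin]
  omega

/-- If `g = ((h_{1,1},…,h_{1,d}), h₂) ∈ H₁ ≀ H₂` has nontrivial top component `h₂ ≠ 1`,
then `⟨g⟩` has at most `(d-1)e` orbits on the `ed` points, i.e. `ind(g) ≥ e`. -/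
theorem stmt_6 {e d : ℕ} (H₁ : Subgroup (Equiv.Perm (Fin e)))
    (H₂ : Subgroup (Equiv.Perm (Fin d)))
    (h1 : IsTransitive H₁) (h2 : IsTransitive H₂)
    (h₂ : Equiv.Perm (Fin d)) (f : Fin d → Equiv.Perm (Fin e))
    (hmem : h₂ ∈ H₂) (hf : ∀ i, f i ∈ H₁) (hne : h₂ ≠ 1) :
    orbCount (wrElem h₂ f) ≤ (d - 1) * e ∧ e ≤ permInd (wrElem h₂ f) :=
  stmt_6_general h₂ f hne
end

section
/- Let G = H₁ ≀ H₂ ≤ S_{ed} with H₁ ≤ S_e, H₂ ≤ S_d transitive, and let h, h̃ ∈ H₁. Then h and h̃ are conjugate in H₁ if and only if the elements ((h,1,…,1),1) and ((h̃,1,…,1),1) are conjugate in G. -/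
/-!
A base element `((h,1,…,1),1)` is conjugated by `(f, σ) ∈ H₁ ≀ H₂` into the base element whose
`σ i`-th coordinate is `f i · (h,1,…,1)_i · (f i)⁻¹`. If `σ` fixes the first block this is
conjugation of `h` by `f 0` inside `H₁`; otherwise both `h` and `h̃` must be trivial.
-/

lemma conj_eq_of_forall_conj_mulSingle {ι G : Type*} [DecidableEq ι] [Group G]
    (σ : Equiv.Perm ι) (f : ι → G) (j : ι) (a b : G)
    (hconj : ∀ i,
      f i * (Pi.mulSingle j a : ι → G) i * (f i)⁻¹ = (Pi.mulSingle j b : ι → G) (σ i)) :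
    f j * a * (f j)⁻¹ = b := by
  by_cases hσ : σ j = j
  · simpa [hσ] using hconj j
  · have ha : a = 1 := by simpa [Pi.mulSingle_eq_of_ne hσ] using hconj j
    have hne : σ.symm j ≠ j := by rwa [Ne, Equiv.symm_apply_eq, eq_comm]
    have hb : b = 1 := by simpa [Pi.mulSingle_eq_of_ne hne] using (hconj (σ.symm j)).symm
    simp [ha, hb]

section Wreath

variable {e d : ℕ}

lemma wrElem_right_injective (σ : Equiv.Perm (Fin d)) :
    Function.Injective (wrElem σ : (Fin d → Equiv.Perm (Fin e)) → _) := fun _ _ H =>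
  funext fun i => Equiv.ext fun x => congrArg (fun p : Equiv.Perm _ => (p (i, x)).2) H

lemma wrElem_mem_wreath {H₁ : Subgroup (Equiv.Perm (Fin e))} {H₂ : Subgroup (Equiv.Perm (Fin d))}
    {σ : Equiv.Perm (Fin d)} {f : Fin d → Equiv.Perm (Fin e)} (hσ : σ ∈ H₂)
    (hf : ∀ i, f i ∈ H₁) : wrElem σ f ∈ wreath H₁ H₂ :=
  ⟨σ, f, hσ, hf, rfl⟩

lemma wrElem_conj_base_eq_iff (σ : Equiv.Perm (Fin d)) (f a b : Fin d → Equiv.Perm (Fin e)) :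
    wrElem σ f * wrElem 1 a * (wrElem σ f)⁻¹ = wrElem 1 b ↔
      ∀ i, f i * a i * (f i)⁻¹ = b (σ i) := by
  simp only [mul_inv_eq_iff_eq_mul, wrElem_mul, mul_one, one_mul, Equiv.Perm.one_apply,
    (wrElem_right_injective σ).eq_iff, funext_iff]

end Wreath

theorem stmt_7_general {e d : ℕ} (hd : 0 < d) (H₁ : Subgroup (Equiv.Perm (Fin e)))
    (H₂ : Subgroup (Equiv.Perm (Fin d)))
    (h h' : Equiv.Perm (Fin e)) :
    (∃ c ∈ H₁, c * h * c⁻¹ = h') ↔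
    (∃ g ∈ wreath H₁ H₂,
      g * wrElem 1 (Function.update (fun _ => 1) (⟨0, hd⟩ : Fin d) h) * g⁻¹ =
        wrElem 1 (Function.update (fun _ => 1) (⟨0, hd⟩ : Fin d) h')) := by
  set i₀ : Fin d := ⟨0, hd⟩
  constructor
  · rintro ⟨c, hc, rfl⟩
    refine ⟨wrElem 1 (Pi.mulSingle i₀ c), wrElem_mem_wreath H₂.one_mem fun i => ?_,
      (wrElem_conj_base_eq_iff _ _ _ _).2 fun i => ?_⟩
    · by_cases hi : i = i₀ <;> simp [hi, hc, H₁.one_mem]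
    · by_cases hi : i = i₀ <;> simp [hi]
  · rintro ⟨g, ⟨σ, f, -, hf, rfl⟩, hg⟩
    exact ⟨f i₀, hf i₀, conj_eq_of_forall_conj_mulSingle σ f i₀ h h'
      ((wrElem_conj_base_eq_iff σ f _ _).1 hg)⟩

/-- Elements `h, h̃ ∈ H₁` are conjugate in `H₁` if and only if the wreath product elements
`((h,1,…,1),1)` and `((h̃,1,…,1),1)` are conjugate in `G = H₁ ≀ H₂`. -/
theorem stmt_7 {e d : ℕ} (hd : 0 < d) (H₁ : Subgroup (Equiv.Perm (Fin e)))
    (H₂ : Subgroup (Equiv.Perm (Fin d)))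
    (h1 : IsTransitive H₁) (h2 : IsTransitive H₂)
    (h h' : Equiv.Perm (Fin e)) (hh : h ∈ H₁) (hh' : h' ∈ H₁) :
    (∃ c ∈ H₁, c * h * c⁻¹ = h') ↔
    (∃ g ∈ wreath H₁ H₂,
      g * wrElem 1 (Function.update (fun _ => 1) (⟨0, hd⟩ : Fin d) h) * g⁻¹ =
        wrElem 1 (Function.update (fun _ => 1) (⟨0, hd⟩ : Fin d) h')) :=
  stmt_7_general hd H₁ H₂ h h'
end

section
/- Suppose the Dirichlet series ∑_{K ∈ 𝒦} c_K N_K^{-s} with c_K ≥ 0, N_K ≥ 1 converges for all Re(s) > 1 (equivalently ∑_{N_K ≤ x} c_K = O_ε(x^{1+ε}) for all ε > 0). Suppose further that for each K the error terms g_K(s) satisfy |g_K(s)| ≤ C(ε)·(D_K |1+s|^m)^{(1−σ)/2+ε}·D_K^{1/2} for σ = Re(s) > 1/2, where D_K ≤ c·N_K for a fixed constant c. Then the series ∑_K g_K(s)/N_K^{2s} converges absolutely and locally uniformly on Re(s) > 7/8, defining an analytic function there. -/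
/-!
Near a point with real part above 7/8 we have `Re s ≥ σ > 7/8` and `‖1 + s‖ ≤ B`. There
`D_K ≤ c₀ N_K` turns the bound on `g_K` into `O(N_K ^ ((1 - σ)/2 + ε + 1/2))`, so the `K`-th term
is `O(c_K / N_K ^ p)` with `p = 5σ/2 - 1 - ε > 19/16 - ε > 1`, a summable majorant by the
convergence of `∑ c_K N_K^{-s}` for `s > 1`. The Weierstrass M-test gives locally uniform
convergence, and holomorphy passes to locally uniform limits.
-/

open Complex Filter Topology

theorem tendstoLocallyUniformlyOn_tsum_of_locally_bounded {α β F : Type*}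
    [NormedAddCommGroup F] [CompleteSpace F] [TopologicalSpace β] {f : α → β → F} {s : Set β}
    (hf : ∀ x ∈ s, ∃ t ∈ 𝓝[s] x, ∃ u : α → ℝ, Summable u ∧ ∀ n, ∀ y ∈ t, ‖f n y‖ ≤ u n) :
    TendstoLocallyUniformlyOn (fun t x => ∑ n ∈ t, f n x) (fun x => ∑' n, f n x) atTop s :=
  fun v hv x hx =>
    let ⟨t, ht, _, hu, hfu⟩ := hf x hx
    ⟨t, ht, tendstoUniformlyOn_tsum hu hfu v hv⟩

theorem differentiableOn_ofReal_mul_div_cpow {U : Set ℂ} {g : ℂ → ℂ}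
    (hg : DifferentiableOn ℂ g U) (c : ℝ) {N : ℝ} (hN : N ≠ 0) :
    DifferentiableOn ℂ (fun s => (c : ℂ) * g s / (N : ℂ) ^ (2 * s)) U := by
  have hN' : (N : ℂ) ≠ 0 := ofReal_ne_zero.mpr hN
  refine ((differentiableOn_const _).mul hg).div ?_ fun s _ => ?_
  · exact ((differentiable_id.const_mul 2).const_cpow (Or.inl hN')).differentiableOn
  · simp [cpow_eq_zero_iff, hN']

theorem rpow_mul_rpow_half_le {D N A B c₀ a e : ℝ} (m : ℕ) (hD : 1 ≤ D) (hc₀ : 0 ≤ c₀)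
    (hN : 0 ≤ N) (hDN : D ≤ c₀ * N) (hA : 1 ≤ A) (hAB : A ≤ B) (hae : a ≤ e) (he : 0 ≤ e) :
    (D * A ^ m) ^ a * D ^ (1 / 2 : ℝ) ≤ c₀ ^ (e + 1 / 2) * (B ^ m) ^ e * N ^ (e + 1 / 2) := by
  have hD0 : 0 < D := by linarith
  have hB : 0 ≤ B := by linarith
  have hX : 1 ≤ D * A ^ m := one_le_mul_of_one_le_of_one_le hD (one_le_pow₀ hA)
  calc (D * A ^ m) ^ a * D ^ (1 / 2 : ℝ) ≤ (D * A ^ m) ^ e * D ^ (1 / 2 : ℝ) := by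
        gcongr
    _ ≤ D ^ e * (B ^ m) ^ e * D ^ (1 / 2 : ℝ) := by
        rw [Real.mul_rpow hD0.le (by positivity)]
        gcongr
    _ = (B ^ m) ^ e * D ^ (e + 1 / 2) := by
        rw [Real.rpow_add hD0]
        ring
    _ ≤ (B ^ m) ^ e * (c₀ * N) ^ (e + 1 / 2) := by
        gcongr
    _ = c₀ ^ (e + 1 / 2) * (B ^ m) ^ e * N ^ (e + 1 / 2) := by
        rw [Real.mul_rpow hc₀ hN]
        ring

theorem norm_ofReal_mul_div_cpow_le {c N D c₀ C ε σ B e : ℝ} {m : ℕ} {z s : ℂ}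
    (hc : 0 ≤ c) (hN : 1 ≤ N) (hD : 1 ≤ D) (hDN : D ≤ c₀ * N) (hC : 0 ≤ C)
    (hσ : 0 ≤ σ) (hs : σ ≤ s.re) (hsB : ‖1 + s‖ ≤ B) (he : (1 - σ) / 2 + ε ≤ e) (he0 : 0 ≤ e)
    (hz : ‖z‖ ≤ C * (D * ‖1 + s‖ ^ m) ^ ((1 - s.re) / 2 + ε) * D ^ (1 / 2 : ℝ)) :
    ‖(c : ℂ) * z / (N : ℂ) ^ (2 * s)‖ ≤
      C * c₀ ^ (e + 1 / 2) * (B ^ m) ^ e * (c / N ^ (2 * σ - (e + 1 / 2))) := by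
  have hN0 : 0 < N := by linarith
  have hc₀ : 0 ≤ c₀ := by nlinarith
  have h1s : 1 ≤ ‖1 + s‖ := by
    have := re_le_norm (1 + s)
    simp only [add_re, one_re] at this
    linarith
  have hB : 0 ≤ B := by linarith
  have hz' : ‖z‖ ≤ C * (c₀ ^ (e + 1 / 2) * (B ^ m) ^ e * N ^ (e + 1 / 2)) := by
    rw [mul_assoc] at hz
    exact hz.trans (mul_le_mul_of_nonneg_left (rpow_mul_rpow_half_le m hD hc₀ hN0.le hDN h1s hsB
      (by linarith) he0) hC)
  have hNpow : N ^ (e + 1 / 2) / N ^ (2 * s.re) ≤ (N ^ (2 * σ - (e + 1 / 2)))⁻¹ := by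
    rw [← Real.rpow_sub hN0, ← Real.rpow_neg hN0.le]
    exact Real.rpow_le_rpow_of_exponent_le hN (by linarith)
  calc ‖(c : ℂ) * z / (N : ℂ) ^ (2 * s)‖ = c * ‖z‖ / N ^ (2 * s.re) := by
        rw [norm_div, norm_mul, norm_cpow_eq_rpow_re_of_pos hN0, norm_real,
          Real.norm_of_nonneg hc]
        simp
    _ ≤ c * (C * (c₀ ^ (e + 1 / 2) * (B ^ m) ^ e * N ^ (e + 1 / 2))) / N ^ (2 * s.re) := by
        gcongr
    _ = C * c₀ ^ (e + 1 / 2) * (B ^ m) ^ e * (c * (N ^ (e + 1 / 2) / N ^ (2 * s.re))) := by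
        ring
    _ ≤ C * c₀ ^ (e + 1 / 2) * (B ^ m) ^ e * (c * (N ^ (2 * σ - (e + 1 / 2)))⁻¹) := by
        gcongr
    _ = _ := by rw [← div_eq_mul_inv]

section DirichletSeries

variable {𝒦 : Type*} {c N D : 𝒦 → ℝ} {g : 𝒦 → ℂ → ℂ} {m : ℕ} {c₀ C ε : ℝ}

theorem exists_nhds_summable_norm_term_le (hc : ∀ K, 0 ≤ c K) (hN : ∀ K, 1 ≤ N K)
    (hD : ∀ K, 1 ≤ D K) (hDN : ∀ K, D K ≤ c₀ * N K)
    (hconv : ∀ s : ℝ, 1 < s → Summable fun K => c K / N K ^ s) (hC : 0 ≤ C)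
    (hε₀ : 0 ≤ ε) (hε : ε ≤ 3 / 16)
    (hg : ∀ K, ∀ s : ℂ, 1 / 2 < s.re →
      ‖g K s‖ ≤ C * (D K * ‖1 + s‖ ^ m) ^ ((1 - s.re) / 2 + ε) * D K ^ (1 / 2 : ℝ))
    {s₀ : ℂ} (hs₀ : 7 / 8 < s₀.re) :
    ∃ t ∈ 𝓝 s₀, ∃ u : 𝒦 → ℝ, Summable u ∧
      ∀ K, ∀ s ∈ t, ‖(c K : ℂ) * g K s / (N K : ℂ) ^ (2 * s)‖ ≤ u K := by
  set σ := min ((s₀.re + 7 / 8) / 2) 1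
  have hσ : 7 / 8 < σ := lt_min (by linarith) (by norm_num)
  have hσ₁ : σ ≤ 1 := min_le_right _ _
  have hσs₀ : σ < s₀.re := (min_le_left _ _).trans_lt (by linarith)
  set B := ‖1 + s₀‖ + 1
  set e := (1 - σ) / 2 + ε with he
  -- At σ = 7/8 the exponent 2σ - (e + 1/2) equals 19/16 - ε.
  have hp : 1 < 2 * σ - (e + 1 / 2) := by linarith
  have ht : IsOpen {s : ℂ | σ < s.re ∧ ‖1 + s‖ < B} :=
    (isOpen_lt continuous_const continuous_re).inter (isOpen_lt (by fun_prop : Continuous fun s : ℂ => ‖1 + s‖) continuous_const)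
  refine ⟨_, ht.mem_nhds ⟨hσs₀, by linarith⟩, _, (hconv _ hp).mul_left
    (C * c₀ ^ (e + 1 / 2) * (B ^ m) ^ e), fun K s hs => ?_⟩
  exact norm_ofReal_mul_div_cpow_le (hc K) (hN K) (hD K) (hDN K) hC (by linarith) hs.1.le
    hs.2.le le_rfl (by linarith) (hg K s (by linarith [hs.1]))

end DirichletSeries

/-- Key analytic continuation step: if the Dirichlet series `∑ c_K N_K^{-s}` (with
`c_K ≥ 0`, `N_K ≥ 1`) converges for all real `s > 1`, and the error terms `g_K`, analytic
on `Re(s) > 1/2`, satisfy `‖g_K(s)‖ ≤ C(ε) (D_K ‖1+s‖^m)^{(1-Re s)/2 + ε} D_K^{1/2}` there,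
with `D_K ≤ c₀ N_K`, then `∑ c_K g_K(s) / N_K^{2s}` converges absolutely and locally
uniformly on `Re(s) > 7/8` and defines an analytic function there. -/
theorem stmt_16 {𝒦 : Type*} (c N D : 𝒦 → ℝ) (g : 𝒦 → ℂ → ℂ) (m : ℕ) (c₀ : ℝ)
    (hc : ∀ K, 0 ≤ c K) (hN : ∀ K, 1 ≤ N K) (hD : ∀ K, 1 ≤ D K)
    (hDN : ∀ K, D K ≤ c₀ * N K)
    (hconv : ∀ s : ℝ, 1 < s → Summable fun K => c K / N K ^ s)
    (hganal : ∀ K, DifferentiableOn ℂ (g K) {s : ℂ | 1 / 2 < s.re})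
    (hbound : ∀ ε : ℝ, 0 < ε → ∃ C : ℝ, 0 < C ∧ ∀ K, ∀ s : ℂ, 1 / 2 < s.re →
      ‖g K s‖ ≤ C * (D K * ‖1 + s‖ ^ m) ^ ((1 - s.re) / 2 + ε) * D K ^ ((1 : ℝ) / 2)) :
    (∀ s : ℂ, 7 / 8 < s.re →
      Summable fun K => ‖(c K : ℂ) * g K s / (N K : ℂ) ^ (2 * s)‖) ∧
    DifferentiableOn ℂ (fun s : ℂ => ∑' K, (c K : ℂ) * g K s / (N K : ℂ) ^ (2 * s))
      {s : ℂ | 7 / 8 < s.re} ∧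
    TendstoLocallyUniformlyOn
      (fun (t : Finset 𝒦) (s : ℂ) => ∑ K ∈ t, (c K : ℂ) * g K s / (N K : ℂ) ^ (2 * s))
      (fun s : ℂ => ∑' K, (c K : ℂ) * g K s / (N K : ℂ) ^ (2 * s))
      Filter.atTop {s : ℂ | 7 / 8 < s.re} := by
  obtain ⟨C, hC, hg⟩ := hbound (1 / 16) (by norm_num)
  have hdom (s₀ : ℂ) (hs₀ : 7 / 8 < s₀.re) := exists_nhds_summable_norm_term_le hc hN hD hDN
    hconv hC.le (by norm_num) (by norm_num) hg hs₀
  have hlim := tendstoLocallyUniformlyOn_tsum_of_locally_bounded fun s₀ hs₀ =>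
    let ⟨t, ht, hu⟩ := hdom s₀ hs₀
    ⟨t, mem_nhdsWithin_of_mem_nhds ht, hu⟩
  refine ⟨fun s hs => ?_, hlim.differentiableOn (.of_forall fun T => ?_)
    (isOpen_lt continuous_const continuous_re), hlim⟩
  · obtain ⟨t, ht, u, hu, hle⟩ := hdom s hs
    exact hu.of_nonneg_of_le (fun K => norm_nonneg _) fun K => hle K s (mem_of_mem_nhds ht)
  · refine DifferentiableOn.fun_sum fun K _ => differentiableOn_ofReal_mul_div_cpow ?_ _ ?_
    · exact (hganal K).mono fun s (hs : 7 / 8 < s.re) => show 1 / 2 < s.re by linarith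
    · linarith [hN K]
end

section
/- Let G ≤ S_n be transitive with a nontrivial block system whose blocks have size 2, and suppose G contains a transposition τ. Then τ swaps the two points of a single block of size 2, and G is permutation isomorphic to C₂ ≀ H where H ≤ S_{n/2} is the group induced by G on the set of blocks. -/
/-- The group isomorphism `Perm α ≃* Perm β` induced by an equivalence `α ≃ β`. -/
def permCongrMul {α β : Type*} (σ : α ≃ β) : Equiv.Perm α ≃* Equiv.Perm β :=
  { Equiv.permCongr σ with
    map_mul' := by intro f g; ext x; simp [Equiv.permCongr] }

/-!
Transport everything along `σ` to `Fin d × Fin 2`, where the blocks are the fibres of the first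
projection. A transposition preserving the blocks swaps the two points of a single block: a
swap of points in different blocks would move one point to another block while fixing its
partner. Conjugating this block swap by the transitive group `G`, which permutes the blocks,
gives the swap of every block, and these generate the base group `C₂ᵈ`. Every block-preserving
permutation has the form `(i, x) ↦ (h i, f i x)`; since the base group lies in `G`, the element
`(h, f)` lies in `G` as soon as some `(h, f₀)` does, i.e. as soon as `h` lies in the group `H`
induced on the blocks.
-/

open Equiv

section Transport

variable {α β : Type*}

lemma permCongrMul_apply (σ : α ≃ β) (g : Perm α) (a : α) :
    permCongrMul σ g (σ a) = σ (g a) := by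
  simp [permCongrMul, Equiv.permCongr]

lemma permCongrMul_swap [DecidableEq α] [DecidableEq β] (σ : α ≃ β) (a b : α) :
    permCongrMul σ (swap a b) = swap (σ a) (σ b) :=
  symm_trans_swap_trans a b σ

lemma Equiv.Perm.IsSwap.of_permCongrMul [DecidableEq α] [DecidableEq β] {σ : α ≃ β}
    {g : Perm α} (hg : (permCongrMul σ g).IsSwap) : g.IsSwap := by
  obtain ⟨x, y, hxy, hg⟩ := hg
  refine ⟨σ.symm x, σ.symm y, σ.symm.injective.ne hxy, (permCongrMul σ).injective ?_⟩
  simp only [hg, permCongrMul_swap, apply_symm_apply]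

lemma IsTransitive.comap_permCongrMul {G : Subgroup (Perm β)} (hG : IsTransitive G)
    (σ : α ≃ β) : IsTransitive (G.comap (permCongrMul σ).toMonoidHom) := by
  intro a b
  obtain ⟨g, hg, hgab⟩ := hG (σ a) (σ b)
  refine ⟨(permCongrMul σ).symm g, by simpa using hg, σ.injective ?_⟩
  rw [← permCongrMul_apply, MulEquiv.apply_symm_apply, hgab]

end Transport

section Blocks

variable {ι κ α : Type*}

def PreservesBlocks (g : Perm (ι × κ)) : Prop :=
  ∀ p q : ι × κ, p.1 = q.1 → (g p).1 = (g q).1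

lemma preservesBlocks_of_image_eq (σ : ι × κ ≃ α) {g : Perm (ι × κ)}
    (hg : ∀ i, ∃ j,
      ⇑(permCongrMul σ g) '' (⇑σ '' {p | p.1 = i}) = ⇑σ '' {p | p.1 = j}) :
    PreservesBlocks g := by
  have fst_eq : ∀ p : ι × κ, ∃ j, ∀ q : ι × κ, q.1 = p.1 → (g q).1 = j := by
    intro p
    obtain ⟨j, hj⟩ := hg p.1
    refine ⟨j, fun q hq => ?_⟩
    have hmem : σ (g q) ∈ ⇑σ '' {p | p.1 = j} := by
      rw [← hj, ← permCongrMul_apply]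
      exact Set.mem_image_of_mem _ (Set.mem_image_of_mem _ hq)
    simpa using hmem
  intro p q hpq
  obtain ⟨j, hj⟩ := fst_eq p
  rw [hj p rfl, hj q hpq.symm]

lemma fst_eq_of_preservesBlocks_swap [DecidableEq ι] [DecidableEq κ] [Nontrivial κ]
    {a b : ι × κ} (h : PreservesBlocks (swap a b)) : a.1 = b.1 := by
  by_contra hne
  obtain ⟨x, hx⟩ := exists_ne a.2
  have hca : (a.1, x) ≠ a := fun e => hx (congrArg Prod.snd e)
  have hcb : (a.1, x) ≠ b := fun e => hne (by rw [← e])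
  have := h a (a.1, x) rfl
  rw [swap_apply_left, swap_apply_of_ne_of_ne hca hcb] at this
  exact hne this.symm

lemma Equiv.Perm.IsSwap.eq_swap_zero_one_of_preservesBlocks [DecidableEq ι]
    {τ : Perm (ι × Fin 2)} (hτ : τ.IsSwap) (h : PreservesBlocks τ) :
    ∃ i, τ = swap (i, 0) (i, 1) := by
  obtain ⟨a, b, hab, rfl⟩ := hτ
  have hfst := fst_eq_of_preservesBlocks_swap h
  refine ⟨a.1, ?_⟩
  obtain ⟨i, x⟩ := a
  obtain ⟨j, y⟩ := b
  obtain rfl : i = j := hfst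
  have hxy : x ≠ y := fun e => hab (by rw [e])
  fin_cases x <;> fin_cases y <;> simp_all [swap_comm]

lemma swap_mem_of_isTransitive [DecidableEq ι] {K : Subgroup (Perm (ι × Fin 2))}
    (hT : IsTransitive K) (hK : ∀ g ∈ K, PreservesBlocks g) {i₀ : ι}
    (h : swap (i₀, 0) (i₀, 1) ∈ K) (i : ι) : swap (i, 0) (i, 1) ∈ K := by
  obtain ⟨g, hgK, hg0⟩ := hT (i₀, 0) (i, 0)
  have hg1 : g (i₀, 1) = (i, 1) := by
    have hne : g (i₀, 1) ≠ (i, 0) := hg0 ▸ g.injective.ne (by simp)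
    have hfst : (g (i₀, 1)).1 = i := by rw [hK g hgK (i₀, 1) (i₀, 0) rfl, hg0]
    exact Prod.ext hfst (Fin.eq_one_of_ne_zero _ fun h0 => hne (Prod.ext hfst h0))
  have := K.mul_mem (K.mul_mem hgK h) (K.inv_mem hgK)
  rwa [← swap_apply_apply, hg0, hg1] at this

end Blocks

section Wreath

variable {d e : ℕ}

lemma wrElem_apply (h : Perm (Fin d)) (f : Fin d → Perm (Fin e)) (p : Fin d × Fin e) :
    wrElem h f p = (h p.1, f p.1 p.2) := rfl

lemma wrElem_inv (h : Perm (Fin d)) (f : Fin d → Perm (Fin e)) :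
    (wrElem h f)⁻¹ = wrElem h⁻¹ (fun j => (f (h⁻¹ j))⁻¹) := by
  refine inv_eq_of_mul_eq_one_right ?_
  rw [wrElem_mul]
  simp only [mul_inv_cancel]
  exact wrElem_one

lemma mem_wreath_top_top_of_preservesBlocks [NeZero e] {g : Perm (Fin d × Fin e)}
    (hg : PreservesBlocks g) : g ∈ wreath ⊤ ⊤ := by
  set b : Fin d → Fin d := fun i => (g (i, 0)).1
  have hb : ∀ p, (g p).1 = b p.1 := fun p => hg p (p.1, 0) rfl
  have hb_surj : Function.Surjective b := fun j => ⟨(g⁻¹ (j, 0)).1, by simp [← hb]⟩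
  have hf_inj : ∀ i, Function.Injective fun x => (g (i, x)).2 := fun i x y hxy =>
    congrArg Prod.snd (g.injective (Prod.ext (by rw [hb, hb]) hxy))
  refine ⟨Equiv.ofBijective b hb_surj.bijective_of_finite,
    fun i => Equiv.ofBijective _ (hf_inj i).bijective_of_finite, trivial, fun _ => trivial, ?_⟩
  ext1 p
  exact Prod.ext (hb p) rfl

def wrBase : (Fin d → Perm (Fin e)) →* Perm (Fin d × Fin e) where
  toFun f := wrElem 1 f
  map_one' := wrElem_one
  map_mul' f f' := by rw [wrElem_mul, mul_one]; rfl

lemma wrBase_mulSingle_swap (i : Fin d) :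
    wrBase (Pi.mulSingle i (swap 0 1)) = swap ((i, 0) : Fin d × Fin 2) (i, 1) := by
  ext1 ⟨j, x⟩
  by_cases hji : j = i
  · subst hji
    fin_cases x <;> simp [wrBase, wrElem_apply]
  · have hne : ∀ y : Fin 2, (j, x) ≠ (i, y) := fun y e => hji (congrArg Prod.fst e)
    simp [wrBase, wrElem_apply, hji, swap_apply_of_ne_of_ne (hne 0) (hne 1)]

lemma wrBase_mem_of_swap_mem {K : Subgroup (Perm (Fin d × Fin 2))}
    (h : ∀ i, swap ((i, 0) : Fin d × Fin 2) (i, 1) ∈ K) (v : Fin d → Perm (Fin 2)) :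
    wrBase v ∈ K := by
  refine Subgroup.pi_mem_of_mulSingle_mem (H := K.comap wrBase) v fun i => ?_
  have : v i = 1 ∨ v i = swap 0 1 := by generalize v i = x; revert x; decide
  rcases this with hv | hv
  · simp [hv]
  · simpa [hv, wrBase_mulSingle_swap] using h i

def blockGroup (K : Subgroup (Perm (Fin d × Fin e))) : Subgroup (Perm (Fin d)) where
  carrier := {h | ∃ f, wrElem h f ∈ K}
  one_mem' := ⟨fun _ => 1, wrElem_one ▸ K.one_mem⟩
  mul_mem' := by
    rintro h h' ⟨f, hf⟩ ⟨f', hf'⟩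
    exact ⟨_, wrElem_mul h h' f f' ▸ K.mul_mem hf hf'⟩
  inv_mem' := by
    rintro h ⟨f, hf⟩
    exact ⟨_, wrElem_inv h f ▸ K.inv_mem hf⟩

lemma isTransitive_blockGroup [NeZero e] {K : Subgroup (Perm (Fin d × Fin e))}
    (hT : IsTransitive K) (hK : K ≤ wreath ⊤ ⊤) : IsTransitive (blockGroup K) := by
  intro i j
  obtain ⟨g, hgK, hg⟩ := hT (i, 0) (j, 0)
  obtain ⟨h, f, -, -, rfl⟩ := hK hgK
  exact ⟨h, ⟨f, hgK⟩, congrArg Prod.fst hg⟩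

lemma eq_wreath_top_blockGroup {K : Subgroup (Perm (Fin d × Fin e))} (hK : K ≤ wreath ⊤ ⊤)
    (hbase : ∀ v, wrBase v ∈ K) : K = wreath ⊤ (blockGroup K) := by
  refine le_antisymm (fun g hg => ?_) ?_
  · obtain ⟨h, f, -, -, rfl⟩ := hK hg
    exact ⟨h, f, ⟨f, hg⟩, fun _ => trivial, rfl⟩
  · rintro _ ⟨h, f, ⟨f₀, hf₀⟩, -, rfl⟩
    have hsplit : wrElem h f = wrElem h f₀ * wrBase (fun i => (f₀ i)⁻¹ * f i) := by
      simp [wrBase, wrElem_mul]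
    rw [hsplit]
    exact K.mul_mem hf₀ (hbase _)

end Wreath

theorem stmt_17_general {d n : ℕ} (G : Subgroup (Equiv.Perm (Fin n)))
    (hT : IsTransitive G) (σ : Fin d × Fin 2 ≃ Fin n)
    (hblock : ∀ g ∈ G, ∀ i : Fin d, ∃ j : Fin d,
      ⇑g '' (⇑σ '' {p : Fin d × Fin 2 | p.1 = i}) = ⇑σ '' {p : Fin d × Fin 2 | p.1 = j})
    (τ : Equiv.Perm (Fin n)) (hτG : τ ∈ G) (hτ : τ.IsSwap) :
    (∃ i : Fin d, τ (σ (i, 0)) = σ (i, 1) ∧ τ (σ (i, 1)) = σ (i, 0) ∧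
      ∀ x : Fin n, x ≠ σ (i, 0) → x ≠ σ (i, 1) → τ x = x) ∧
    ∃ H : Subgroup (Equiv.Perm (Fin d)), IsTransitive H ∧
      G = Subgroup.map (permCongrMul σ).toMonoidHom
            (wreath (⊤ : Subgroup (Equiv.Perm (Fin 2))) H) := by
  obtain ⟨τ, rfl⟩ := (permCongrMul σ).surjective τ
  set K := G.comap (permCongrMul σ).toMonoidHom
  have hKblocks : ∀ g ∈ K, PreservesBlocks g := fun g hg =>
    preservesBlocks_of_image_eq σ (hblock _ hg)
  have hKT : IsTransitive K := hT.comap_permCongrMul σ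
  have hKwr : K ≤ wreath ⊤ ⊤ := fun g hg =>
    mem_wreath_top_top_of_preservesBlocks (hKblocks g hg)
  obtain ⟨i₀, rfl⟩ :=
    hτ.of_permCongrMul.eq_swap_zero_one_of_preservesBlocks (hKblocks _ hτG)
  have hbase : ∀ v, wrBase v ∈ K :=
    wrBase_mem_of_swap_mem (swap_mem_of_isTransitive hKT hKblocks hτG)
  refine ⟨⟨i₀, ?_, ?_, fun x hx0 hx1 => ?_⟩, blockGroup K,
    isTransitive_blockGroup hKT hKwr, ?_⟩
  · simp [permCongrMul_swap]
  · simp [permCongrMul_swap]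
  · simp [permCongrMul_swap, swap_apply_of_ne_of_ne hx0 hx1]
  · rw [← eq_wreath_top_blockGroup hKwr hbase,
      Subgroup.map_comap_eq_self_of_surjective (permCongrMul σ).surjective]

/-- If `G ≤ Sₙ` is transitive with a block system of blocks of size 2 (given by the
identification `σ : Fin d × Fin 2 ≃ Fin n`) and `τ ∈ G` is a transposition, then `τ` swaps
the two points of a single block and fixes all other points, and `G` is permutation
isomorphic to `C₂ ≀ H` where `H ≤ S_{n/2}` is the transitive group induced on the blocks. -/
theorem stmt_17 {d n : ℕ} (hn : n = 2 * d) (G : Subgroup (Equiv.Perm (Fin n)))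
    (hT : IsTransitive G) (σ : Fin d × Fin 2 ≃ Fin n)
    (hblock : ∀ g ∈ G, ∀ i : Fin d, ∃ j : Fin d,
      ⇑g '' (⇑σ '' {p : Fin d × Fin 2 | p.1 = i}) = ⇑σ '' {p : Fin d × Fin 2 | p.1 = j})
    (τ : Equiv.Perm (Fin n)) (hτG : τ ∈ G) (hτ : τ.IsSwap) :
    (∃ i : Fin d, τ (σ (i, 0)) = σ (i, 1) ∧ τ (σ (i, 1)) = σ (i, 0) ∧
      ∀ x : Fin n, x ≠ σ (i, 0) → x ≠ σ (i, 1) → τ x = x) ∧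
    ∃ H : Subgroup (Equiv.Perm (Fin d)), IsTransitive H ∧
      G = Subgroup.map (permCongrMul σ).toMonoidHom
            (wreath (⊤ : Subgroup (Equiv.Perm (Fin 2))) H) :=
  stmt_17_general G hT σ hblock τ hτG hτ
end
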